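/- Let ℓ ≥ 3, ℓ ≠ 4, m > n > 1 be integers, a = 2(ℓ−2), b = ℓ−4. If positive integers r, s, t satisfy P(ℓ, r) = m P(ℓ, s) = n P(ℓ, t), then setting u = ar − b, v = as − b, w = at − b, X = m²n v², Y = m²n² u v w, the point (X, Y) lies on the cubic curve Y² = X(X − A)(X − B) where A = mn(m−1)b² and B = mn(m−n)b². -/

import Mathlib

/-!
Completing the square gives `(a k - b)² = 8 (ℓ - 2) P(ℓ, k) + b²`, so the hypotheses say
`u² - b² = m (v² - b²) = n (w² - b²)`. Then `X - A = m n u²` and `X - B = m n² w²`, and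
`X (X - A) (X - B) = m⁴ n⁴ u² v² w² = Y²`.
-/

/-- The k-th ℓ-gonal number. -/
def polygonal (ℓ k : ℤ) : ℤ := ((ℓ - 2) * k ^ 2 - (ℓ - 4) * k) / 2

theorem two_mul_polygonal (ℓ k : ℤ) :
    2 * polygonal ℓ k = (ℓ - 2) * k ^ 2 - (ℓ - 4) * k := by
  refine Int.mul_ediv_cancel' ?_
  obtain ⟨c, hc⟩ : Even ((k - 1) * k) := by
    simpa only [sub_add_cancel] using Int.even_mul_succ_self (k - 1)
  exact ⟨(ℓ - 4) * c + k ^ 2, by linear_combination (ℓ - 4) * hc⟩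

theorem sq_sub_eq_polygonal (ℓ k : ℤ) :
    (2 * (ℓ - 2) * k - (ℓ - 4)) ^ 2 = 8 * (ℓ - 2) * polygonal ℓ k + (ℓ - 4) ^ 2 := by
  linear_combination -4 * (ℓ - 2) * two_mul_polygonal ℓ k

theorem sq_eq_cubic_of_sq_sub_sq_eq {R : Type*} [CommRing R] {m n u v w b : R}
    (hm : u ^ 2 - b ^ 2 = m * (v ^ 2 - b ^ 2)) (hn : u ^ 2 - b ^ 2 = n * (w ^ 2 - b ^ 2)) :
    (m ^ 2 * n ^ 2 * u * v * w) ^ 2 =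
      m ^ 2 * n * v ^ 2 * (m ^ 2 * n * v ^ 2 - m * n * (m - 1) * b ^ 2) *
        (m ^ 2 * n * v ^ 2 - m * n * (m - n) * b ^ 2) := by
  have hu : m * v ^ 2 - (m - 1) * b ^ 2 = u ^ 2 := by linear_combination -hm
  have hw : m * v ^ 2 - (m - n) * b ^ 2 = n * w ^ 2 := by linear_combination hn - hm
  calc (m ^ 2 * n ^ 2 * u * v * w) ^ 2 = m ^ 4 * n ^ 3 * v ^ 2 * u ^ 2 * (n * w ^ 2) := by ring
    _ = m ^ 4 * n ^ 3 * v ^ 2 * (m * v ^ 2 - (m - 1) * b ^ 2) * (m * v ^ 2 - (m - n) * b ^ 2) := by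
      rw [hu, hw]
    _ = _ := by ring

theorem stmt_16_general (ℓ m n r s t : ℤ)
    (h1 : polygonal ℓ r = m * polygonal ℓ s)
    (h2 : polygonal ℓ r = n * polygonal ℓ t)
    (a b u v w X Y A B : ℤ)
    (ha : a = 2 * (ℓ - 2)) (hb : b = ℓ - 4)
    (hu : u = a * r - b) (hv : v = a * s - b) (hw : w = a * t - b)
    (hX : X = m ^ 2 * n * v ^ 2) (hY : Y = m ^ 2 * n ^ 2 * u * v * w)
    (hA : A = m * n * (m - 1) * b ^ 2) (hB : B = m * n * (m - n) * b ^ 2) :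
    Y ^ 2 = X * (X - A) * (X - B) := by
  subst ha hb hu hv hw hX hY hA hB
  apply sq_eq_cubic_of_sq_sub_sq_eq
  · rw [sq_sub_eq_polygonal, sq_sub_eq_polygonal]
    linear_combination 8 * (ℓ - 2) * h1
  · rw [sq_sub_eq_polygonal, sq_sub_eq_polygonal]
    linear_combination 8 * (ℓ - 2) * h2

/-- If P(ℓ, r) = m P(ℓ, s) = n P(ℓ, t), then (X, Y) as below lies on the
elliptic curve Y² = X(X − A)(X − B). -/
theorem stmt_16 (ℓ m n r s t : ℤ) (hl : 3 ≤ ℓ) (hl4 : ℓ ≠ 4)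
    (hmn : n < m) (hn : 1 < n) (hr : 0 < r) (hs : 0 < s) (ht : 0 < t)
    (h1 : polygonal ℓ r = m * polygonal ℓ s)
    (h2 : polygonal ℓ r = n * polygonal ℓ t)
    (a b u v w X Y A B : ℤ)
    (ha : a = 2 * (ℓ - 2)) (hb : b = ℓ - 4)
    (hu : u = a * r - b) (hv : v = a * s - b) (hw : w = a * t - b)
    (hX : X = m ^ 2 * n * v ^ 2) (hY : Y = m ^ 2 * n ^ 2 * u * v * w)
    (hA : A = m * n * (m - 1) * b ^ 2) (hB : B = m * n * (m - n) * b ^ 2) :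
    Y ^ 2 = X * (X - A) * (X - B) :=
  stmt_16_general ℓ m n r s t h1 h2 a b u v w X Y A B ha hb hu hv hw hX hY hA hB
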